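/- Let w ≥ 1 and n ≥ 2 be integers and let Q(u₁,u₂) = Σ_{0≤i≤w-1, 0≤j≤n-1} u₁^{i+j+(3-n-w)/2} u₂^{i-j+(n-w+1)/2} − Σ_{0≤i≤w, 0≤j≤n-2} u₁^{i+j+(3-n-w)/2} u₂^{i-j+(n-w-1)/2}, where exponents are taken in (1/2)ℤ. For each fixed value a of the u₁-exponent, let c(a) denote the leading (highest u₂-exponent) nonzero coefficient among monomials u₁^a u₂^b of Q. Then c(a) changes sign between consecutive values a and a+1 (both for which c is defined) if and only if a = (w-n+1)/2. -/

import Mathlib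

open Finset

noncomputable section

/-- Laurent polynomials in `u₁, u₂` with exponents in the half-integer lattice
(realized inside `ℚ`). -/
abbrev LQ := AddMonoidAlgebra ℤ (ℚ × ℚ)

/-- The monomial `u₁^r * u₂^s` with rational (half-integer) exponents. -/
def mono (r s : ℚ) : LQ := AddMonoidAlgebra.single (r, s) 1

/-- auxiliary: the expression defining `Q`. -/
def Qexpr (w n : ℕ) : LQ :=
  (∑ i ∈ range w, ∑ j ∈ range n,
      mono ((i : ℚ) + j + (3 - (n : ℚ) - w) / 2) ((i : ℚ) - j + ((n : ℚ) - w + 1) / 2))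
    - ∑ i ∈ range (w + 1), ∑ j ∈ range (n - 1),
      mono ((i : ℚ) + j + (3 - (n : ℚ) - w) / 2) ((i : ℚ) - j + ((n : ℚ) - w - 1) / 2)

lemma Qexpr_coeff (w n : ℕ) (a b : ℚ) : (Qexpr w n).coeff (a,b) =
    (∑ i ∈ range w, ∑ j ∈ range n,
       if ((i:ℚ)+j+(3-(n:ℚ)-w)/2, (i:ℚ)-j+((n:ℚ)-w+1)/2) = (a,b) then (1:ℤ) else 0)
    - ∑ i ∈ range (w+1), ∑ j ∈ range (n-1),
       if ((i:ℚ)+j+(3-(n:ℚ)-w)/2, (i:ℚ)-j+((n:ℚ)-w-1)/2) = (a,b) then (1:ℤ) else 0 := by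
  have h : (Qexpr w n).coeff (a,b) =
      (((∑ i ∈ range w, ∑ j ∈ range n,
        Finsupp.single (((i:ℚ)+j+(3-(n:ℚ)-w)/2, (i:ℚ)-j+((n:ℚ)-w+1)/2)) (1:ℤ))
      - ∑ i ∈ range (w+1), ∑ j ∈ range (n-1),
        Finsupp.single (((i:ℚ)+j+(3-(n:ℚ)-w)/2, (i:ℚ)-j+((n:ℚ)-w-1)/2)) (1:ℤ)) : (ℚ×ℚ) →₀ ℤ) (a,b) := by
    simp only [Qexpr, mono, AddMonoidAlgebra.coeff_sub, AddMonoidAlgebra.coeff_sum, AddMonoidAlgebra.coeff_single]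
  rw [h, Finsupp.sub_apply]
  simp only [Finset.sum_apply', Finsupp.single_apply]

lemma exists_col (w n : ℕ) (a c : ℚ) (h : (Qexpr w n).coeff (a,c) ≠ 0) :
    ∃ k : ℕ, k ≤ w + n - 2 ∧ a = (k:ℚ) + (3-(n:ℚ)-w)/2 := by
  by_contra hcon
  push_neg at hcon
  apply h
  rw [Qexpr_coeff]
  have hA : (∑ i ∈ range w, ∑ j ∈ range n,
       if ((i:ℚ)+j+(3-(n:ℚ)-w)/2, (i:ℚ)-j+((n:ℚ)-w+1)/2) = (a,c) then (1:ℤ) else 0) = 0 := by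
    apply Finset.sum_eq_zero; intro i hi
    apply Finset.sum_eq_zero; intro j hj
    apply if_neg; intro he
    rw [Prod.mk.injEq] at he
    obtain ⟨h1, h2⟩ := he
    have hi' := Finset.mem_range.mp hi
    have hj' := Finset.mem_range.mp hj
    exact hcon (i+j) (by omega) (by push_cast; linarith)
  have hB : (∑ i ∈ range (w+1), ∑ j ∈ range (n-1),
       if ((i:ℚ)+j+(3-(n:ℚ)-w)/2, (i:ℚ)-j+((n:ℚ)-w-1)/2) = (a,c) then (1:ℤ) else 0) = 0 := by
    apply Finset.sum_eq_zero; intro i hi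
    apply Finset.sum_eq_zero; intro j hj
    apply if_neg; intro he
    rw [Prod.mk.injEq] at he
    obtain ⟨h1, h2⟩ := he
    have hi' := Finset.mem_range.mp hi
    have hj' := Finset.mem_range.mp hj
    exact hcon (i+j) (by omega) (by push_cast; linarith)
  rw [hA, hB, sub_zero]

lemma vanish_lo (w n k : ℕ) (hk : k < w) (c : ℚ)
    (hc : (k:ℚ) + ((n:ℚ)-w+1)/2 < c) :
    (Qexpr w n).coeff ((k:ℚ)+(3-(n:ℚ)-w)/2, c) = 0 := by
  rw [Qexpr_coeff]
  have hA : (∑ i ∈ range w, ∑ j ∈ range n,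
       if ((i:ℚ)+j+(3-(n:ℚ)-w)/2, (i:ℚ)-j+((n:ℚ)-w+1)/2) = ((k:ℚ)+(3-(n:ℚ)-w)/2, c) then (1:ℤ) else 0) = 0 := by
    apply Finset.sum_eq_zero; intro i hi
    apply Finset.sum_eq_zero; intro j hj
    apply if_neg; intro he
    rw [Prod.mk.injEq] at he
    obtain ⟨h1, h2⟩ := he
    have hj0 : (0:ℚ) ≤ (j:ℚ) := Nat.cast_nonneg j
    linarith
  have hB : (∑ i ∈ range (w+1), ∑ j ∈ range (n-1),
       if ((i:ℚ)+j+(3-(n:ℚ)-w)/2, (i:ℚ)-j+((n:ℚ)-w-1)/2) = ((k:ℚ)+(3-(n:ℚ)-w)/2, c) then (1:ℤ) else 0) = 0 := by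
    apply Finset.sum_eq_zero; intro i hi
    apply Finset.sum_eq_zero; intro j hj
    apply if_neg; intro he
    rw [Prod.mk.injEq] at he
    obtain ⟨h1, h2⟩ := he
    have hj0 : (0:ℚ) ≤ (j:ℚ) := Nat.cast_nonneg j
    linarith
  rw [hA, hB, sub_zero]

lemma vanish_hi (w n k : ℕ) (hk : w ≤ k) (c : ℚ)
    (hc : 2*(w:ℚ)-k-1 + ((n:ℚ)-w+1)/2 < c) :
    (Qexpr w n).coeff ((k:ℚ)+(3-(n:ℚ)-w)/2, c) = 0 := by
  rw [Qexpr_coeff]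
  have hA : (∑ i ∈ range w, ∑ j ∈ range n,
       if ((i:ℚ)+j+(3-(n:ℚ)-w)/2, (i:ℚ)-j+((n:ℚ)-w+1)/2) = ((k:ℚ)+(3-(n:ℚ)-w)/2, c) then (1:ℤ) else 0) = 0 := by
    apply Finset.sum_eq_zero; intro i hi
    apply Finset.sum_eq_zero; intro j hj
    apply if_neg; intro he
    rw [Prod.mk.injEq] at he
    obtain ⟨h1, h2⟩ := he
    have hiw : (i:ℚ) + 1 ≤ (w:ℚ) := by exact_mod_cast Nat.succ_le_of_lt (Finset.mem_range.mp hi)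
    linarith
  have hB : (∑ i ∈ range (w+1), ∑ j ∈ range (n-1),
       if ((i:ℚ)+j+(3-(n:ℚ)-w)/2, (i:ℚ)-j+((n:ℚ)-w-1)/2) = ((k:ℚ)+(3-(n:ℚ)-w)/2, c) then (1:ℤ) else 0) = 0 := by
    apply Finset.sum_eq_zero; intro i hi
    apply Finset.sum_eq_zero; intro j hj
    apply if_neg; intro he
    rw [Prod.mk.injEq] at he
    obtain ⟨h1, h2⟩ := he
    have hiw : (i:ℚ) ≤ (w:ℚ) := by exact_mod_cast Nat.lt_succ_iff.mp (Finset.mem_range.mp hi)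
    linarith
  rw [hA, hB, sub_zero]

lemma top_lo (w n k : ℕ) (hk : k < w) (hn : 2 ≤ n) :
    (Qexpr w n).coeff ((k:ℚ)+(3-(n:ℚ)-w)/2, (k:ℚ) + ((n:ℚ)-w+1)/2) = 1 := by
  rw [Qexpr_coeff]
  have hB : (∑ i ∈ range (w+1), ∑ j ∈ range (n-1),
       if ((i:ℚ)+j+(3-(n:ℚ)-w)/2, (i:ℚ)-j+((n:ℚ)-w-1)/2)
         = ((k:ℚ)+(3-(n:ℚ)-w)/2, (k:ℚ) + ((n:ℚ)-w+1)/2) then (1:ℤ) else 0) = 0 := by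
    apply Finset.sum_eq_zero; intro i hi
    apply Finset.sum_eq_zero; intro j hj
    apply if_neg; intro he
    rw [Prod.mk.injEq] at he
    obtain ⟨h1, h2⟩ := he
    have hj0 : (0:ℚ) ≤ (j:ℚ) := Nat.cast_nonneg j
    linarith
  have hA : (∑ i ∈ range w, ∑ j ∈ range n,
       if ((i:ℚ)+j+(3-(n:ℚ)-w)/2, (i:ℚ)-j+((n:ℚ)-w+1)/2)
         = ((k:ℚ)+(3-(n:ℚ)-w)/2, (k:ℚ) + ((n:ℚ)-w+1)/2) then (1:ℤ) else 0) = 1 := by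
    rw [Finset.sum_eq_single_of_mem k (Finset.mem_range.mpr hk)]
    · rw [Finset.sum_eq_single_of_mem 0 (Finset.mem_range.mpr (by omega))]
      · rw [if_pos (by norm_num)]
      · intro j hj hjne
        apply if_neg; intro he
        rw [Prod.mk.injEq] at he
        obtain ⟨h1, h2⟩ := he
        have : (j:ℚ) = 0 := by linarith
        exact hjne (by exact_mod_cast this)
    · intro i hi hine
      apply Finset.sum_eq_zero; intro j hj
      apply if_neg; intro he
      rw [Prod.mk.injEq] at he
      obtain ⟨h1, h2⟩ := he
      have : (i:ℚ) = (k:ℚ) := by linarith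
      exact hine (by exact_mod_cast this)
  rw [hA, hB, sub_zero]

lemma top_hi (w n k : ℕ) (hk2 : w ≤ k) (hk : k ≤ w + n - 2) (hn : 2 ≤ n) :
    (Qexpr w n).coeff ((k:ℚ)+(3-(n:ℚ)-w)/2, 2*(w:ℚ)-k-1 + ((n:ℚ)-w+1)/2) = -1 := by
  rw [Qexpr_coeff]
  have hA : (∑ i ∈ range w, ∑ j ∈ range n,
       if ((i:ℚ)+j+(3-(n:ℚ)-w)/2, (i:ℚ)-j+((n:ℚ)-w+1)/2)
         = ((k:ℚ)+(3-(n:ℚ)-w)/2, 2*(w:ℚ)-k-1 + ((n:ℚ)-w+1)/2) then (1:ℤ) else 0) = 0 := by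
    apply Finset.sum_eq_zero; intro i hi
    apply Finset.sum_eq_zero; intro j hj
    apply if_neg; intro he
    rw [Prod.mk.injEq] at he
    obtain ⟨h1, h2⟩ := he
    have : ((2*i+1:ℕ):ℚ) = ((2*w:ℕ):ℚ) := by push_cast; linarith
    have : 2*i+1 = 2*w := by exact_mod_cast this
    omega
  have hB : (∑ i ∈ range (w+1), ∑ j ∈ range (n-1),
       if ((i:ℚ)+j+(3-(n:ℚ)-w)/2, (i:ℚ)-j+((n:ℚ)-w-1)/2)
         = ((k:ℚ)+(3-(n:ℚ)-w)/2, 2*(w:ℚ)-k-1 + ((n:ℚ)-w+1)/2) then (1:ℤ) else 0) = 1 := by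
    rw [Finset.sum_eq_single_of_mem w (Finset.mem_range.mpr (by omega))]
    · rw [Finset.sum_eq_single_of_mem (k-w) (Finset.mem_range.mpr (by omega))]
      · rw [if_pos]
        rw [Prod.mk.injEq, Nat.cast_sub hk2]
        constructor <;> ring
      · intro j hj hjne
        apply if_neg; intro he
        rw [Prod.mk.injEq] at he
        obtain ⟨h1, h2⟩ := he
        have : ((j:ℕ):ℚ) = ((k-w:ℕ):ℚ) := by rw [Nat.cast_sub hk2]; linarith
        exact hjne (by exact_mod_cast this)
    · intro i hi hine
      apply Finset.sum_eq_zero; intro j hj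
      apply if_neg; intro he
      rw [Prod.mk.injEq] at he
      obtain ⟨h1, h2⟩ := he
      have : (i:ℚ) = (w:ℚ) := by linarith
      exact hine (by exact_mod_cast this)
  rw [hA, hB]
  norm_num

/-- For
`Q = Σ_{0≤i≤w-1, 0≤j≤n-1} u₁^{i+j+(3-n-w)/2} u₂^{i-j+(n-w+1)/2}
   − Σ_{0≤i≤w, 0≤j≤n-2} u₁^{i+j+(3-n-w)/2} u₂^{i-j+(n-w-1)/2}`,
the leading (highest `u₂`-exponent) nonzero coefficients of two consecutive columns
`a` and `a+1` (both nonempty) have opposite signs if and only if `a = (w-n+1)/2`. -/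
theorem leading_sign_change (w n : ℕ) (hw : 1 ≤ w) (hn : 2 ≤ n)
    (Q : LQ)
    (hQ : Q = (∑ i ∈ range w, ∑ j ∈ range n,
          mono ((i : ℚ) + j + (3 - (n : ℚ) - w) / 2) ((i : ℚ) - j + ((n : ℚ) - w + 1) / 2))
        - ∑ i ∈ range (w + 1), ∑ j ∈ range (n - 1),
          mono ((i : ℚ) + j + (3 - (n : ℚ) - w) / 2) ((i : ℚ) - j + ((n : ℚ) - w - 1) / 2)) :
    ∀ a b b' : ℚ,
      (Q.coeff (a, b) ≠ 0 ∧ ∀ c : ℚ, b < c → Q.coeff (a, c) = 0) →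
      (Q.coeff (a + 1, b') ≠ 0 ∧ ∀ c : ℚ, b' < c → Q.coeff (a + 1, c) = 0) →
      (Q.coeff (a, b) * Q.coeff (a + 1, b') < 0 ↔ a = ((w : ℚ) - n + 1) / 2) := by
  intro a b b' hb hb'
  obtain ⟨hb0, hbmax⟩ := hb
  obtain ⟨hb'0, hb'max⟩ := hb'
  have hQ' : Q = Qexpr w n := hQ
  rw [hQ'] at hb0 hbmax hb'0 hb'max ⊢
  obtain ⟨k, hk, hak⟩ := exists_col w n a b hb0
  obtain ⟨k', hk', hak'⟩ := exists_col w n (a+1) b' hb'0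
  have hkk : k' = k + 1 := by
    have h1 : (k':ℚ) = ((k+1:ℕ):ℚ) := by push_cast; rw [hak] at hak'; linarith
    exact_mod_cast h1
  subst hkk
  have hQab : (Qexpr w n).coeff (a, b) = (if k < w then 1 else -1) := by
    by_cases hcase : k < w
    · rw [if_pos hcase]
      have htop := top_lo w n k hcase hn
      have hbeq : b = (k:ℚ) + ((n:ℚ)-w+1)/2 := by
        rcases lt_trichotomy b ((k:ℚ) + ((n:ℚ)-w+1)/2) with h|h|h
        · exfalso
          have h0 := hbmax _ h
          rw [hak] at h0
          rw [h0] at htop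
          norm_num at htop
        · exact h
        · exfalso
          apply hb0
          rw [hak]
          exact vanish_lo w n k hcase b h
      rw [hak, hbeq]; exact htop
    · rw [if_neg hcase]
      push_neg at hcase
      have htop := top_hi w n k hcase hk hn
      have hbeq : b = 2*(w:ℚ)-k-1 + ((n:ℚ)-w+1)/2 := by
        rcases lt_trichotomy b (2*(w:ℚ)-k-1 + ((n:ℚ)-w+1)/2) with h|h|h
        · exfalso
          have h0 := hbmax _ h
          rw [hak] at h0
          rw [h0] at htop
          norm_num at htop
        · exact h
        · exfalso
          apply hb0
          rw [hak]
          exact vanish_hi w n k hcase b h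
      rw [hak, hbeq]; exact htop
  have hQab' : (Qexpr w n).coeff (a+1, b') = (if k+1 < w then 1 else -1) := by
    by_cases hcase : k+1 < w
    · rw [if_pos hcase]
      have htop := top_lo w n (k+1) hcase hn
      have hbeq : b' = ((k+1:ℕ):ℚ) + ((n:ℚ)-w+1)/2 := by
        rcases lt_trichotomy b' (((k+1:ℕ):ℚ) + ((n:ℚ)-w+1)/2) with h|h|h
        · exfalso
          have h0 := hb'max _ h
          rw [hak'] at h0
          rw [h0] at htop
          norm_num at htop
        · exact h
        · exfalso
          apply hb'0
          rw [hak']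
          exact vanish_lo w n (k+1) hcase b' h
      rw [hak', hbeq]; exact htop
    · rw [if_neg hcase]
      push_neg at hcase
      have htop := top_hi w n (k+1) hcase hk' hn
      have hbeq : b' = 2*(w:ℚ)-((k+1:ℕ):ℚ)-1 + ((n:ℚ)-w+1)/2 := by
        rcases lt_trichotomy b' (2*(w:ℚ)-((k+1:ℕ):ℚ)-1 + ((n:ℚ)-w+1)/2) with h|h|h
        · exfalso
          have h0 := hb'max _ h
          rw [hak'] at h0
          rw [h0] at htop
          norm_num at htop
        · exact h
        · exfalso
          apply hb'0
          rw [hak']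
          exact vanish_hi w n (k+1) hcase b' h
      rw [hak', hbeq]; exact htop
  rw [hQab, hQab']
  have hiff : a = ((w:ℚ)-n+1)/2 ↔ k + 1 = w := by
    rw [hak]
    constructor
    · intro h
      have h2 : ((k+1:ℕ):ℚ) = ((w:ℕ):ℚ) := by push_cast; linarith
      exact_mod_cast h2
    · intro h
      have h2 : ((k:ℚ)+1) = (w:ℚ) := by exact_mod_cast congrArg (Nat.cast (R := ℚ)) h
      linarith
  rw [hiff]
  split_ifs with h1 h2 h3 <;> norm_num <;> omega
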